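/- (Specialization of Theorem 3 to the calculus of variations) Let a < b ≤ t be real numbers, 0 < α < 1, 0 < β < 1, γ ∈ ℂ, let L : ℝ × ℝ × ℝ → ℝ be continuously differentiable, take φ(u,q,τ) = u, and let H^{α,β}(u,q,p,τ) = L(u,q,τ)(t−τ)^{α−1} + p·u. If functions u, q, p^{α,β} on (a,b) satisfy the fractional stationary condition ∂H^{α,β}/∂u = 0 and the first fractional Hamilton equation D_γ^{α,β} q(τ) = ∂H^{α,β}/∂p, then for every τ ∈ (a,b): p^{α,β}(τ) = −(∂L/∂u)(u(τ),q(τ),τ)(t−τ)^{α−1} and u(τ) = D_γ^{α,β} q(τ); consequently, the second fractional Hamilton equation D_{−γ;τ}^{β,α} p^{α,β}(τ) = −(∂L/∂q)(u(τ),q(τ),τ)(t−τ)^{α−1} becomes D_{−γ;τ}^{β,α}[σ ↦ (∂L/∂u)(D_γ^{α,β} q(σ), q(σ), σ)(t−σ)^{α−1}](τ) = (∂L/∂q)(D_γ^{α,β} q(τ), q(τ), τ)(t−τ)^{α−1}. -/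

import Mathlib

open MeasureTheory Real Set

/-- `t ↦ (1/Γ(1-α)) ∫_a^t f(τ)(t-τ)^{-α} dτ` for a complex-valued `f`. -/
noncomputable def leftKer (a α : ℝ) (f : ℝ → ℂ) (t : ℝ) : ℂ :=
  ((1 / Real.Gamma (1 - α) : ℝ) : ℂ) * ∫ τ in a..t, f τ * (((t - τ) ^ (-α) : ℝ) : ℂ)

/-- Left Riemann–Liouville fractional derivative of order `α ∈ (0,1)`. -/
noncomputable def leftRLD (a α : ℝ) (f : ℝ → ℂ) (t : ℝ) : ℂ :=
  deriv (leftKer a α f) t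

/-- `s ↦ (1/Γ(1-β)) ∫_s^b f(τ)(τ-s)^{-β} dτ` for a complex-valued `f`. -/
noncomputable def rightKer (b β : ℝ) (f : ℝ → ℂ) (s : ℝ) : ℂ :=
  ((1 / Real.Gamma (1 - β) : ℝ) : ℂ) * ∫ τ in s..b, f τ * (((τ - s) ^ (-β) : ℝ) : ℂ)

/-- Right Riemann–Liouville fractional derivative of order `β ∈ (0,1)`. -/
noncomputable def rightRLD (b β : ℝ) (f : ℝ → ℂ) (s : ℝ) : ℂ :=
  - deriv (rightKer b β f) s

/-- The Cresson–Darses fractional derivative operator of order `(α,β)`: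
`D_γ^{α,β} = ½(D_{a+}^α − D_{b-}^β) + (iγ/2)(D_{a+}^α + D_{b-}^β)`. -/
noncomputable def cressonDarses (a b α β : ℝ) (γ : ℂ) (f : ℝ → ℂ) (t : ℝ) : ℂ :=
  (1 / 2 : ℂ) * (leftRLD a α f t - rightRLD b β f t)
    + Complex.I * γ / 2 * (leftRLD a α f t + rightRLD b β f t)

/-- The Cresson–Darses operator applied to a real-valued path `r`. -/
noncomputable def cressonDarsesR (a b α β : ℝ) (γ : ℂ) (r : ℝ → ℝ) : ℝ → ℂ :=
  cressonDarses a b α β γ (fun s => (r s : ℂ))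

/-- The fractional Hamiltonian for the calculus-of-variations case `φ(u,q,τ) = u`:
`H^{α,β}(u,q,p,τ) = L(u,q,τ)(t−τ)^{α−1} + p·u`. -/
noncomputable def fracHamCV (t α : ℝ) (L : ℝ → ℝ → ℝ → ℝ)
    (u q : ℝ) (p : ℂ) (τ : ℝ) : ℂ :=
  ((L u q τ * (t - τ) ^ (α - 1) : ℝ) : ℂ) + p * (u : ℂ)

/-! `H^{α,β}` is affine in `p` with slope `u`, so the first Hamilton equation
reads `u = D_γ^{α,β} q`; the stationary condition `∂L/∂u · (t−τ)^{α−1} + p = 0` identifies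
`p` on `(a,b)`. Both Cresson–Darses operators evaluated at points of `(a,b)` only see their
argument on `(a,b)` and are linear, so the second Hamilton equation for `p` is the
Euler–Lagrange equation for `−p`. -/

section Locality

variable {a b : ℝ} {f h : ℝ → ℂ}

lemma leftKer_congr_on_Ioo (α : ℝ) (hfh : EqOn f h (Ioo a b)) {x : ℝ} (hx : x ∈ Ioo a b) :
    leftKer a α f x = leftKer a α h x := by
  unfold leftKer
  congr 1
  refine intervalIntegral.integral_congr_ae (.of_forall fun y hy => ?_)
  rw [uIoc_of_le hx.1.le] at hy
  rw [hfh ⟨hy.1, hy.2.trans_lt hx.2⟩]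

lemma rightKer_congr_on_Ioo (β : ℝ) (hfh : EqOn f h (Ioo a b)) {x : ℝ} (hx : x ∈ Ioo a b) :
    rightKer b β f x = rightKer b β h x := by
  unfold rightKer
  congr 1
  refine intervalIntegral.integral_congr_ae ?_
  filter_upwards [compl_mem_ae_iff.mpr (measure_singleton b)] with y (hyb : y ≠ b) hy
  rw [uIoc_of_le hx.2.le] at hy
  rw [hfh ⟨hx.1.trans hy.1, hy.2.lt_of_ne hyb⟩]

lemma cressonDarses_congr_on_Ioo (α β : ℝ) (γ : ℂ) (hfh : EqOn f h (Ioo a b)) {τ : ℝ}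
    (hτ : τ ∈ Ioo a b) : cressonDarses a b α β γ f τ = cressonDarses a b α β γ h τ := by
  have hnhds : Ioo a b ∈ nhds τ := isOpen_Ioo.mem_nhds hτ
  have hleft : leftRLD a α f τ = leftRLD a α h τ :=
    Filter.EventuallyEq.deriv_eq <| Filter.mem_of_superset hnhds
      fun _ hx => leftKer_congr_on_Ioo α hfh hx
  have hright : rightRLD b β f τ = rightRLD b β h τ :=
    congrArg Neg.neg <| Filter.EventuallyEq.deriv_eq <| Filter.mem_of_superset hnhds
      fun _ hx => rightKer_congr_on_Ioo β hfh hx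
  rw [cressonDarses, cressonDarses, hleft, hright]

end Locality

section Linearity

lemma leftKer_neg (a α : ℝ) (f : ℝ → ℂ) : leftKer a α (-f) = -leftKer a α f := by
  ext x
  simp only [leftKer, Pi.neg_apply, neg_mul, intervalIntegral.integral_neg, mul_neg]

lemma rightKer_neg (b β : ℝ) (f : ℝ → ℂ) : rightKer b β (-f) = -rightKer b β f := by
  ext x
  simp only [rightKer, Pi.neg_apply, neg_mul, intervalIntegral.integral_neg, mul_neg]

lemma cressonDarses_neg (a b α β : ℝ) (γ : ℂ) (f : ℝ → ℂ) (τ : ℝ) :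
    cressonDarses a b α β γ (-f) τ = -cressonDarses a b α β γ f τ := by
  simp only [cressonDarses, leftRLD, rightRLD, leftKer_neg, rightKer_neg, deriv.neg']
  ring

end Linearity

section Hamiltonian

variable (t α : ℝ) (L : ℝ → ℝ → ℝ → ℝ) (u q : ℝ) (p : ℂ) (τ : ℝ)

lemma hasDerivAt_fracHamCV_momentum :
    HasDerivAt (fun p' : ℂ => fracHamCV t α L u q p' τ) (u : ℂ) p := by
  simpa [fracHamCV] using ((hasDerivAt_id p).mul_const (u : ℂ)).const_add ((L u q τ * (t - τ) ^ (α - 1) : ℝ) : ℂ)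

lemma hasDerivAt_fracHamCV_control (hL : DifferentiableAt ℝ (fun u' => L u' q τ) u) :
    HasDerivAt (fun u' : ℝ => fracHamCV t α L u' q p τ)
      (((deriv (fun u' => L u' q τ) u * (t - τ) ^ (α - 1) : ℝ) : ℂ) + p) u := by
  have hcontrol : HasDerivAt (fun u' : ℝ => p * (u' : ℂ)) p u := by
    simpa using (hasDerivAt_id u).ofReal_comp.const_mul p
  exact ((hL.hasDerivAt.mul_const _).ofReal_comp).add hcontrol

lemma momentum_eq_of_stationary (hL : DifferentiableAt ℝ (fun u' => L u' q τ) u)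
    (hstat : deriv (fun u' : ℝ => fracHamCV t α L u' q p τ) u = 0) :
    p = -((deriv (fun u' => L u' q τ) u * (t - τ) ^ (α - 1) : ℝ) : ℂ) := by
  rw [(hasDerivAt_fracHamCV_control t α L u q p τ hL).deriv] at hstat
  linear_combination hstat

end Hamiltonian

theorem fractional_hamilton_specialization_to_cov_general
    (a b t α β : ℝ) (γ : ℂ)
    (L : ℝ → ℝ → ℝ → ℝ)
    (hL : ContDiff ℝ 1 fun x : ℝ × ℝ × ℝ => L x.1 x.2.1 x.2.2)
    (u q : ℝ → ℝ) (p : ℝ → ℂ)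
    -- the fractional stationary condition ∂H/∂u = 0:
    (hstat : ∀ τ ∈ Ioo a b,
      deriv (fun u' : ℝ => fracHamCV t α L u' (q τ) (p τ) τ) (u τ) = 0)
    -- the first fractional Hamilton equation D_γ^{α,β} q = ∂H/∂p:
    (hham1 : ∀ τ ∈ Ioo a b,
      cressonDarsesR a b α β γ q τ
        = deriv (fun p' : ℂ => fracHamCV t α L (u τ) (q τ) p' τ) (p τ)) :
    (∀ τ ∈ Ioo a b,
      p τ = -((deriv (fun u' : ℝ => L u' (q τ) τ) (u τ) * (t - τ) ^ (α - 1) : ℝ) : ℂ) ∧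
      (u τ : ℂ) = cressonDarsesR a b α β γ q τ) ∧
    -- consequently, the second fractional Hamilton equation
    -- D_{−γ;τ}^{β,α} p = −(∂L/∂q)(t−τ)^{α−1} becomes the Euler–Lagrange equation:
    ((∀ τ ∈ Ioo a b,
        cressonDarses a b β α (-γ) p τ
          = -((deriv (fun q' : ℝ => L (u τ) q' τ) (q τ) * (t - τ) ^ (α - 1) : ℝ) : ℂ)) →
      ∀ τ ∈ Ioo a b,
        cressonDarses a b β α (-γ)
          (fun σ => ((deriv (fun u' : ℝ => L u' (q σ) σ) (u σ)
            * (t - σ) ^ (α - 1) : ℝ) : ℂ)) τ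
          = ((deriv (fun q' : ℝ => L (u τ) q' τ) (q τ) * (t - τ) ^ (α - 1) : ℝ) : ℂ)) := by
  have hLu : ∀ τ, DifferentiableAt ℝ (fun u' => L u' (q τ) τ) (u τ) := fun τ =>
    (hL.differentiable one_ne_zero).differentiableAt.comp (u τ)
      (f := fun u' : ℝ => ((u', q τ, τ) : ℝ × ℝ × ℝ)) (by fun_prop)
  have hmomentum : ∀ τ ∈ Ioo a b,
      p τ = -((deriv (fun u' : ℝ => L u' (q τ) τ) (u τ) * (t - τ) ^ (α - 1) : ℝ) : ℂ) :=
    fun τ hτ => momentum_eq_of_stationary t α L (u τ) (q τ) (p τ) τ (hLu τ) (hstat τ hτ)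
  have hcontrol : ∀ τ ∈ Ioo a b, (u τ : ℂ) = cressonDarsesR a b α β γ q τ := fun τ hτ => by
    rw [hham1 τ hτ, (hasDerivAt_fracHamCV_momentum t α L (u τ) (q τ) (p τ) τ).deriv]
  refine ⟨fun τ hτ => ⟨hmomentum τ hτ, hcontrol τ hτ⟩, fun hham2 τ hτ => ?_⟩
  have hneg : EqOn (fun σ => ((deriv (fun u' : ℝ => L u' (q σ) σ) (u σ)
      * (t - σ) ^ (α - 1) : ℝ) : ℂ)) (-p) (Ioo a b) := fun σ hσ => by
    simp [hmomentum σ hσ]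
  rw [cressonDarses_congr_on_Ioo β α (-γ) hneg hτ, cressonDarses_neg, hham2 τ hτ, neg_neg]

/-- Specialization of Theorem 3 to the fractional problem of the calculus of variations
(`φ(u,q,τ) = u`).  The stationary condition and the first Hamilton equation yield
`p^{α,β}(τ) = −(∂L/∂u)(u(τ),q(τ),τ)(t−τ)^{α−1}` and `u(τ) = D_γ^{α,β} q(τ)`;
consequently, the second Hamilton equation becomes the `(α,β)` fractional
Euler–Lagrange equation `D_{−γ;τ}^{β,α}[σ ↦ (∂L/∂u)(D_γ^{α,β}q(σ),q(σ),σ)(t−σ)^{α−1}](τ)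
  = (∂L/∂q)(D_γ^{α,β}q(τ),q(τ),τ)(t−τ)^{α−1}` (where, by the derived identity
`u = D_γ^{α,β} q` on `(a,b)`, the velocity argument is written via `u`). -/
theorem fractional_hamilton_specialization_to_cov
    (a b t α β : ℝ) (hab : a < b) (hbt : b ≤ t)
    (hα : 0 < α) (hα1 : α < 1) (hβ : 0 < β) (hβ1 : β < 1) (γ : ℂ)
    (L : ℝ → ℝ → ℝ → ℝ)
    (hL : ContDiff ℝ 1 fun x : ℝ × ℝ × ℝ => L x.1 x.2.1 x.2.2)
    (u q : ℝ → ℝ) (p : ℝ → ℂ)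
    -- the fractional stationary condition ∂H/∂u = 0:
    (hstat : ∀ τ ∈ Ioo a b,
      deriv (fun u' : ℝ => fracHamCV t α L u' (q τ) (p τ) τ) (u τ) = 0)
    -- the first fractional Hamilton equation D_γ^{α,β} q = ∂H/∂p:
    (hham1 : ∀ τ ∈ Ioo a b,
      cressonDarsesR a b α β γ q τ
        = deriv (fun p' : ℂ => fracHamCV t α L (u τ) (q τ) p' τ) (p τ)) :
    (∀ τ ∈ Ioo a b,
      p τ = -((deriv (fun u' : ℝ => L u' (q τ) τ) (u τ) * (t - τ) ^ (α - 1) : ℝ) : ℂ) ∧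
      (u τ : ℂ) = cressonDarsesR a b α β γ q τ) ∧
    -- consequently, the second fractional Hamilton equation
    -- D_{−γ;τ}^{β,α} p = −(∂L/∂q)(t−τ)^{α−1} becomes the Euler–Lagrange equation:
    ((∀ τ ∈ Ioo a b,
        cressonDarses a b β α (-γ) p τ
          = -((deriv (fun q' : ℝ => L (u τ) q' τ) (q τ) * (t - τ) ^ (α - 1) : ℝ) : ℂ)) →
      ∀ τ ∈ Ioo a b,
        cressonDarses a b β α (-γ)
          (fun σ => ((deriv (fun u' : ℝ => L u' (q σ) σ) (u σ)
            * (t - σ) ^ (α - 1) : ℝ) : ℂ)) τ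
          = ((deriv (fun q' : ℝ => L (u τ) q' τ) (q τ) * (t - τ) ^ (α - 1) : ℝ) : ℂ)) :=
  fractional_hamilton_specialization_to_cov_general a b t α β γ L hL u q p hstat hham1
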